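/- Under the truly perfect G-sampler framework, conditioned on the process accepting some coordinate, the probability that the accepted coordinate is i equals G(f_i)/F_G. -/
import Mathlib


open Finset

lemma telescope_aux (G : ℕ → ℝ) (hG0 : G 0 = 0) (a : ℕ) :
    (∑ j ∈ Finset.Icc 1 a, (G (a - j + 1) - G (a - j))) = G a := by
  have h : (∑ j ∈ Finset.Icc 1 a, (G (a - j + 1) - G (a - j)))
      = ∑ k ∈ Finset.range a, (G (k + 1) - G k) := by
    apply Finset.sum_bij' (fun j _ => a - j) (fun k _ => a - k)
    · intro j hj
      simp only [Finset.mem_Icc] at hj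
      simp only [Finset.mem_range]
      omega
    · intro k hk
      simp only [Finset.mem_range] at hk
      simp only [Finset.mem_Icc]
      omega
    · intro j hj
      simp only [Finset.mem_Icc] at hj
      omega
    · intro k hk
      simp only [Finset.mem_range] at hk
      omega
    · intro j hj
      simp only [Finset.mem_Icc] at hj
      congr 2 <;> omega;
  rw [h, Finset.sum_range_sub G, hG0, sub_zero]

/-- In the truly perfect `G`-sampler framework, conditioned on the process accepting
some coordinate, the probability that the accepted coordinate is `i` equals
`G (f i) / F_G`, where `F_G = ∑ i, G (f i) > 0`. -/
theorem sampler_conditional_prob (n : ℕ) (f : Fin n → ℕ) (m : ℕ) (hm : m = ∑ i, f i)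
    (hm0 : 0 < m) (G : ℕ → ℝ) (hG0 : G 0 = 0) (ζ : ℝ) (hζ : 0 < ζ)
    (hdiff : ∀ x : ℕ, 1 ≤ x → 0 ≤ G x - G (x - 1) ∧ G x - G (x - 1) ≤ ζ)
    (hFG : 0 < ∑ i, G (f i)) (i : Fin n) :
    (∑ j ∈ Finset.Icc 1 (f i), (1 / (m : ℝ)) * ((G (f i - j + 1) - G (f i - j)) / ζ))
      / (∑ k, ∑ j ∈ Finset.Icc 1 (f k),
          (1 / (m : ℝ)) * ((G (f k - j + 1) - G (f k - j)) / ζ))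
      = G (f i) / (∑ k, G (f k)) := by
  have key : ∀ a : ℕ, (∑ j ∈ Finset.Icc 1 a, (1 / (m : ℝ)) * ((G (a - j + 1) - G (a - j)) / ζ))
      = (1 / (m : ℝ)) * (G a / ζ) := by
    intro a
    rw [← Finset.mul_sum, ← Finset.sum_div, telescope_aux G hG0 a]
  simp only [key]
  have hm' : (m : ℝ) ≠ 0 := Nat.cast_ne_zero.mpr hm0.ne'
  rw [← Finset.mul_sum, ← Finset.sum_div]
  have hS : (∑ k : Fin n, G (f k)) ≠ 0 := hFG.ne'
  field_simp
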